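/- arXiv:2008.07024 — 3 statements merged into one kernel-verified Lean document; each statement's English description precedes it below -/
import Mathlib

section
/- There exists δ ∈ (0, 1) such that for every z ∈ ℂ with 1 − δ ≤ |z| ≤ 1 (and z ≠ 0): p_z(x₀(z)) ≥ −1.42, and p_z(x_k(z)) ≥ 5.81·|k|^{3/2} for every integer k ≠ 0. -/
/-
On `|z| ≤ 1` put `s = -x_k(z) ≥ 0`, so that `p_z(x_k) = s (2 s² - 3 (1 - 2 log|z|))` and
`s² = -log|z| + ((log|z|)² + θ_k²/4)^{1/2}`. For `k = 0` only `s ≥ 0` is known, and the bound is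
the minimum `-4 r³` of `2 s³ - 6 r² s` over `s ≥ 0`, with `r² = (1 - 2 log|z|)/2 ≈ 1/2`.
For `k ≠ 0` one has `|θ_k| ≥ 2π|k|`, hence `s² ≥ π|k|`, and then
`p_z(x_k) ≥ √(π|k|) (2π - 3 - ε) |k|` with `√π (2π - 3) ≈ 5.82`.
-/

open MeasureTheory Filter Topology

noncomputable section

/-- θ_k(z) = −2·Arg z + 4πk. -/
def thetaK (z : ℂ) (k : ℤ) : ℝ := -(2 * Complex.arg z) + 4 * Real.pi * (k : ℝ)

/-- x_k(z) = −(−log|z| + ((log|z|)² + θ_k(z)²/4)^{1/2})^{1/2}, the real part of the Bethe root. -/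
def xkR (z : ℂ) (k : ℤ) : ℝ :=
  -Real.sqrt (-Real.log (‖z‖) +
      Real.sqrt ((Real.log (‖z‖)) ^ 2 + (thetaK z k) ^ 2 / 4))

/-- The cubic polynomial p_z(w) = −2w³ + 3w(1 − 2·log|z|). -/
def pz (z : ℂ) (w : ℝ) : ℝ := -2 * w ^ 3 + 3 * w * (1 - 2 * Real.log (‖z‖))

open Real

lemma neg_four_mul_pow_three_le {r s : ℝ} (hr : 0 ≤ r) (hs : 0 ≤ s) :
    -4 * r ^ 3 ≤ 2 * s ^ 3 - 6 * r ^ 2 * s := by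
  nlinarith [mul_nonneg (sq_nonneg (s - r)) (by positivity : 0 ≤ s + 2 * r)]

lemma neg_inv_2000_le_log {x : ℝ} (hx : 1 - 1 / 2500 ≤ x) : -(1 / 2000) ≤ log x := by
  have hx0 : 0 < x := by linarith
  have hinv : x⁻¹ ≤ 1 + 1 / 2000 := by
    rw [inv_le_iff_one_le_mul₀ hx0]
    nlinarith
  linarith [one_sub_inv_le_log_of_pos hx0]

lemma two_mul_pi_mul_abs_le_abs_thetaK (z : ℂ) {k : ℤ} (hk : k ≠ 0) :
    2 * π * |(k : ℝ)| ≤ |thetaK z k| := by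
  have hk1 : (1 : ℝ) ≤ |(k : ℝ)| := by
    rw [← Int.cast_abs]
    exact_mod_cast Int.one_le_abs hk
  have htri : |4 * π * (k : ℝ)| ≤ |thetaK z k| + |2 * Complex.arg z| := by
    simpa [thetaK] using abs_add_le (thetaK z k) (2 * Complex.arg z)
  rw [abs_mul (4 * π), abs_of_pos (by positivity : (0 : ℝ) < 4 * π), abs_mul, abs_two] at htri
  nlinarith [Complex.abs_arg_le_pi z, pi_pos]

lemma xkR_nonpos (z : ℂ) (k : ℤ) : xkR z k ≤ 0 :=
  neg_nonpos.mpr (sqrt_nonneg _)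

lemma xkR_sq (z : ℂ) (k : ℤ) :
    xkR z k ^ 2 = -log ‖z‖ + √(log ‖z‖ ^ 2 + thetaK z k ^ 2 / 4) := by
  have habs : |log ‖z‖| ≤ √(log ‖z‖ ^ 2 + thetaK z k ^ 2 / 4) := by
    rw [← sqrt_sq_eq_abs]
    exact sqrt_le_sqrt (le_add_of_nonneg_right (by positivity))
  rw [xkR, neg_sq, sq_sqrt (by linarith [le_abs_self (log ‖z‖)])]

lemma pz_xkR (z : ℂ) (k : ℤ) :
    pz z (xkR z k) = -xkR z k * (2 * xkR z k ^ 2 - 3 * (1 - 2 * log ‖z‖)) := by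
  rw [pz]
  ring

lemma pi_mul_abs_le_xkR_sq {z : ℂ} (hz : ‖z‖ ≤ 1) {k : ℤ} (hk : k ≠ 0) :
    π * |(k : ℝ)| ≤ xkR z k ^ 2 := by
  have hL : log ‖z‖ ≤ 0 := log_nonpos (norm_nonneg z) hz
  have hθ : |thetaK z k| / 2 ≤ √(log ‖z‖ ^ 2 + thetaK z k ^ 2 / 4) := by
    calc |thetaK z k| / 2 = √((thetaK z k / 2) ^ 2) := by rw [sqrt_sq_eq_abs, abs_div, abs_two]
      _ ≤ _ := sqrt_le_sqrt (by nlinarith [sq_nonneg (log ‖z‖)])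
  rw [xkR_sq]
  linarith [two_mul_pi_mul_abs_le_abs_thetaK z hk]

lemma pz_xkR_zero_lower_bound {z : ℂ} (hz : ‖z‖ ≤ 1)
    (hL : -(1 / 2000) ≤ log ‖z‖) : -1.42 ≤ pz z (xkR z 0) := by
  have hL0 : log ‖z‖ ≤ 0 := log_nonpos (norm_nonneg z) hz
  set r := √((1 - 2 * log ‖z‖) / 2)
  have hr0 : 0 ≤ r := sqrt_nonneg _
  have hr2 : r ^ 2 = (1 - 2 * log ‖z‖) / 2 := sq_sqrt (by linarith)
  have hr : r ≤ 0.708 := by nlinarith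
  have hp : pz z (xkR z 0) = 2 * (-xkR z 0) ^ 3 - 6 * r ^ 2 * (-xkR z 0) := by
    rw [pz_xkR, hr2]
    ring
  have hmin := neg_four_mul_pow_three_le hr0 (neg_nonneg.mpr (xkR_nonpos z 0))
  have hr3 : r ^ 3 ≤ 0.355 := by nlinarith
  linarith

lemma abs_rpow_three_halves (x : ℝ) : |x| ^ ((3 : ℝ) / 2) = |x| * √|x| := by
  rcases (abs_nonneg x).eq_or_lt with h | h
  · rw [← h]
    norm_num
  · rw [show (3 : ℝ) / 2 = 1 + 1 / 2 by norm_num, rpow_add h, rpow_one, ← sqrt_eq_rpow]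

lemma pz_xkR_lower_bound_of_ne_zero {z : ℂ} (hz : ‖z‖ ≤ 1) (hL : -(1 / 2000) ≤ log ‖z‖) {k : ℤ}
    (hk : k ≠ 0) : 5.81 * |(k : ℝ)| ^ ((3 : ℝ) / 2) ≤ pz z (xkR z k) := by
  set K := |(k : ℝ)| with hKdef
  set s := -xkR z k
  have hs0 : 0 ≤ s := neg_nonneg.mpr (xkR_nonpos z k)
  have hK : 1 ≤ K := by
    rw [hKdef, ← Int.cast_abs]
    exact_mod_cast Int.one_le_abs hk
  have hpi := pi_gt_d4
  have hs2 : π * K ≤ s ^ 2 := by rw [neg_sq]; exact pi_mul_abs_le_xkR_sq hz hk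
  have hs : √π * √K ≤ s := by
    rw [← sqrt_mul pi_pos.le, ← sqrt_sq hs0]
    exact sqrt_le_sqrt hs2
  have hfactor : (2 * π - 3.003) * K ≤ 2 * s ^ 2 - 3 * (1 - 2 * log ‖z‖) := by nlinarith
  have hsqrtpi : 1.7724 ≤ √π := by
    rw [le_sqrt (by norm_num) pi_pos.le]
    nlinarith
  have hconst : 5.81 ≤ √π * (2 * π - 3.003) := by nlinarith
  calc 5.81 * K ^ ((3 : ℝ) / 2) = 5.81 * (K * √K) := by rw [abs_rpow_three_halves]
    _ ≤ √π * (2 * π - 3.003) * (K * √K) := by gcongr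
    _ = √π * √K * ((2 * π - 3.003) * K) := by ring
    _ ≤ s * (2 * s ^ 2 - 3 * (1 - 2 * log ‖z‖)) := by
        gcongr ?_ * ?_
        exact mul_nonneg (by linarith) (by linarith)
    _ = pz z (xkR z k) := by rw [pz_xkR, neg_sq]

theorem statement10 :
    ∃ δ ∈ Set.Ioo (0 : ℝ) 1, ∀ z : ℂ, z ≠ 0 → 1 - δ ≤ ‖z‖ → ‖z‖ ≤ 1 →
      -1.42 ≤ pz z (xkR z 0) ∧
      ∀ k : ℤ, k ≠ 0 → 5.81 * |(k : ℝ)| ^ ((3 : ℝ) / 2) ≤ pz z (xkR z k) := by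
  refine ⟨1 / 2500, by norm_num, fun z _ hδ hz => ?_⟩
  have hL := neg_inv_2000_le_log hδ
  exact ⟨pz_xkR_zero_lower_bound hz hL,
    fun k hk => pz_xkR_lower_bound_of_ne_zero hz hL hk⟩
end
end

section
/- For every δ₁ ∈ (0, 1) there exists c > 0 such that |u_k(z)| ≥ c·√(|k| + 1) and |u_j(z) + u_k(z)| ≥ c·√(|j| + |k| + 2) for all z ∈ ℂ with 0 < |z| < 1 − δ₁ and all integers j, k. -/
open MeasureTheory Filter Topology

noncomputable section

/-- The Bethe roots u_k(z) = −(−2·log|z| + i·θ_k(z))^{1/2} (principal branch). -/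
def uK (z : ℂ) (k : ℤ) : ℂ :=
  -((((-2 * Real.log (‖z‖) : ℝ) : ℂ) + Complex.I * ((thetaK z k : ℝ) : ℂ)) ^ ((1 : ℂ) / 2))

/-! Write `u_k = -√w_k` with `w_k = -2 log|z| + i θ_k`. Since `|z| < 1 - δ₁`, the real part of
`w_k` is at least `-2 log (1 - δ₁) > 0`, while `|θ_k| ≥ 4π|k| - 2π`; hence `|w_k| ≳ |k| + 1` and
`|u_k| = √|w_k| ≳ √(|k| + 1)`. As `Re w_k > 0`, every `√w_k` lies in the sector `|arg| ≤ π/4`,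
where `Re √w ≥ √(|w| / 2)`; so no cancellation occurs in `u_j + u_k`, and
`|u_j + u_k| ≥ Re √w_j + Re √w_k ≳ √(|j| + 1) + √(|k| + 1) ≥ √(|j| + |k| + 2)`. -/

open Real

lemma Real.sqrt_add_le_add_sqrt {x y : ℝ} (hx : 0 ≤ x) (hy : 0 ≤ y) :
    √(x + y) ≤ √x + √y := by
  rw [Real.sqrt_le_left (by positivity)]
  nlinarith [Real.sq_sqrt hx, Real.sq_sqrt hy, Real.sqrt_nonneg x, Real.sqrt_nonneg y]

namespace Complex

lemma norm_cpow_half (w : ℂ) : ‖w ^ ((1 : ℂ) / 2)‖ = √‖w‖ := by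
  rw [one_div, ← ofReal_ofNat, ← ofReal_inv, norm_cpow_real, Real.sqrt_eq_rpow, one_div]

lemma sqrt_half_norm_le_re_cpow_half {w : ℂ} (hw : 0 ≤ w.re) :
    √(‖w‖ / 2) ≤ (w ^ ((1 : ℂ) / 2)).re := by
  rw [one_div, cpow_inv_two_re]
  gcongr
  linarith

lemma sqrt_norm_add_sqrt_norm_le_norm_add_cpow_half {w₁ w₂ : ℂ} (h₁ : 0 ≤ w₁.re)
    (h₂ : 0 ≤ w₂.re) :
    (√‖w₁‖ + √‖w₂‖) / √2 ≤ ‖w₁ ^ ((1 : ℂ) / 2) + w₂ ^ ((1 : ℂ) / 2)‖ :=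
  calc (√‖w₁‖ + √‖w₂‖) / √2 = √(‖w₁‖ / 2) + √(‖w₂‖ / 2) := by
        rw [Real.sqrt_div' _ zero_le_two, Real.sqrt_div' _ zero_le_two, add_div]
    _ ≤ (w₁ ^ ((1 : ℂ) / 2)).re + (w₂ ^ ((1 : ℂ) / 2)).re :=
        add_le_add (sqrt_half_norm_le_re_cpow_half h₁) (sqrt_half_norm_le_re_cpow_half h₂)
    _ = (w₁ ^ ((1 : ℂ) / 2) + w₂ ^ ((1 : ℂ) / 2)).re := (add_re _ _).symm
    _ ≤ _ := re_le_norm _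

end Complex

def wK (z : ℂ) (k : ℤ) : ℂ :=
  (((-2 * Real.log (‖z‖) : ℝ) : ℂ) + Complex.I * ((thetaK z k : ℝ) : ℂ))

lemma uK_eq_neg_cpow (z : ℂ) (k : ℤ) : uK z k = -(wK z k ^ ((1 : ℂ) / 2)) := rfl

@[simp]
lemma wK_re (z : ℂ) (k : ℤ) : (wK z k).re = -2 * Real.log ‖z‖ := by
  simp [wK]

@[simp]
lemma wK_im (z : ℂ) (k : ℤ) : (wK z k).im = thetaK z k := by
  simp [wK]

lemma wK_re_nonneg {z : ℂ} (hz : ‖z‖ ≤ 1) (k : ℤ) : 0 ≤ (wK z k).re := by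
  have := Real.log_nonpos (norm_nonneg z) hz
  rw [wK_re]
  linarith

lemma norm_uK (z : ℂ) (k : ℤ) : ‖uK z k‖ = √‖wK z k‖ := by
  rw [uK_eq_neg_cpow, norm_neg, Complex.norm_cpow_half]

lemma sub_le_abs_thetaK (z : ℂ) (k : ℤ) : 4 * π * |(k : ℝ)| - 2 * π ≤ |thetaK z k| := by
  have harg := Complex.abs_arg_le_pi z
  have hθ : thetaK z k = 4 * π * k - 2 * Complex.arg z := by
    unfold thetaK
    ring
  have := abs_sub_abs_le_abs_sub (4 * π * (k : ℝ)) (2 * Complex.arg z)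
  rw [hθ]
  norm_num [abs_mul, abs_of_pos pi_pos] at this
  linarith

lemma min_mul_le_norm_wK {z : ℂ} {ρ : ℝ} (hz₀ : 0 < ‖z‖) (hzρ : ‖z‖ ≤ ρ) (k : ℤ) :
    min (-2 * Real.log ρ) π * (|(k : ℝ)| + 1) ≤ ‖wK z k‖ := by
  rcases eq_or_ne k 0 with rfl | hk
  · have hlog := Real.log_le_log hz₀ hzρ
    calc min (-2 * Real.log ρ) π * (|((0 : ℤ) : ℝ)| + 1) ≤ -2 * Real.log ρ := by simp
      _ ≤ (wK z 0).re := by rw [wK_re]; linarith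
      _ ≤ ‖wK z 0‖ := Complex.re_le_norm _
  · have hk : (1 : ℝ) ≤ |(k : ℝ)| := by
      rw [← Int.cast_abs]
      exact_mod_cast Int.one_le_abs hk
    calc min (-2 * Real.log ρ) π * (|(k : ℝ)| + 1) ≤ π * (|(k : ℝ)| + 1) := by
          gcongr
          exact min_le_right _ _
      _ ≤ 4 * π * |(k : ℝ)| - 2 * π := by nlinarith [pi_pos]
      _ ≤ |(wK z k).im| := by rw [wK_im]; exact sub_le_abs_thetaK z k
      _ ≤ ‖wK z k‖ := Complex.abs_im_le_norm _

theorem statement12 (δ₁ : ℝ) (h0 : 0 < δ₁) (h1 : δ₁ < 1) :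
    ∃ c > (0 : ℝ), ∀ z : ℂ, 0 < ‖z‖ → ‖z‖ < 1 - δ₁ →
      (∀ k : ℤ, c * Real.sqrt (|(k : ℝ)| + 1) ≤ ‖uK z k‖) ∧
      (∀ j k : ℤ, c * Real.sqrt (|(j : ℝ)| + |(k : ℝ)| + 2) ≤ ‖uK z j + uK z k‖) := by
  set c₁ := min (-2 * Real.log (1 - δ₁)) π
  have hlog : Real.log (1 - δ₁) < 0 := Real.log_neg (by linarith) (by linarith)
  have hc₁ : 0 < c₁ := lt_min (by linarith) pi_pos
  refine ⟨√(c₁ / 2), by positivity, fun z hz₀ hz₁ => ?_⟩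
  have hw : ∀ k : ℤ, √c₁ * √(|(k : ℝ)| + 1) ≤ √‖wK z k‖ := fun k => by
    rw [← Real.sqrt_mul hc₁.le]
    exact Real.sqrt_le_sqrt (min_mul_le_norm_wK hz₀ hz₁.le k)
  have hre : ∀ k : ℤ, 0 ≤ (wK z k).re := wK_re_nonneg (by linarith)
  refine ⟨fun k => ?_, fun j k => ?_⟩
  · calc √(c₁ / 2) * √(|(k : ℝ)| + 1) ≤ √c₁ * √(|(k : ℝ)| + 1) := by gcongr; linarith
      _ ≤ ‖uK z k‖ := (norm_uK z k).symm ▸ hw k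
  · calc √(c₁ / 2) * √(|(j : ℝ)| + |(k : ℝ)| + 2)
        ≤ √(c₁ / 2) * (√(|(j : ℝ)| + 1) + √(|(k : ℝ)| + 1)) := by
          rw [show |(j : ℝ)| + |(k : ℝ)| + 2 = (|(j : ℝ)| + 1) + (|(k : ℝ)| + 1) by ring]
          gcongr
          exact Real.sqrt_add_le_add_sqrt (by positivity) (by positivity)
      _ = (√c₁ * √(|(j : ℝ)| + 1) + √c₁ * √(|(k : ℝ)| + 1)) / √2 := by
          rw [Real.sqrt_div' _ zero_le_two]
          ring
      _ ≤ (√‖wK z j‖ + √‖wK z k‖) / √2 := by gcongr <;> exact hw _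
      _ ≤ ‖uK z j + uK z k‖ := by
          rw [uK_eq_neg_cpow, uK_eq_neg_cpow, ← neg_add, norm_neg]
          exact Complex.sqrt_norm_add_sqrt_norm_le_norm_add_cpow_half (hre j) (hre k)
end
end

section
/- Let r ≥ 1, let s ∈ ℂ, let U be an open neighborhood of s, let G : U → M be analytic (where M is the space of r×r complex matrices), and let A, R ∈ M satisfy R·R = 0. Define X(ξ) := (ξ − s)^{−1}·A + G(ξ) for ξ ∈ U ∖ {s}, so that X has a simple pole at s with residue A. Then the following are equivalent: (i) the limit lim_{ξ→s} X(ξ)·R exists and equals A (i.e. the residue of X at s equals lim_{ξ→s} X(ξ)·R); (ii) the matrix-valued function ξ ↦ X(ξ)·(I − (ξ − s)^{−1}·R), defined on U ∖ {s}, extends to a function analytic on all of U. Moreover, both conditions are equivalent to the single equation A = G(s)·R. -/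
/-!
Write `X ξ = (ξ - s)⁻¹ • A + G ξ`. Then `X ξ * R = (ξ - s)⁻¹ • (A * R) + G ξ * R` and
`X ξ * (1 - (ξ - s)⁻¹ • R) - G ξ = (ξ - s)⁻¹ • (A - G ξ * R) - (ξ - s)⁻² • (A * R)`.
A term `(ξ - s)⁻¹ • f ξ` with `f ξ → a` can only have a limit at `s` if `a = 0`, so either
condition forces first `A * R = 0` and then `A - G s * R = 0`. Conversely, if `A = G s * R`
then `A * R = G s * R * R = 0`, `X ξ * R = G ξ * R`, and
`G + dslope (fun ξ => A - G ξ * R) s` is the required analytic extension, by the removable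
singularity theorem.
-/

open Filter Topology

theorem tendsto_sub_nhdsNE_zero {E : Type*} [AddGroup E] [TopologicalSpace E]
    [IsTopologicalAddGroup E] (s : E) : Tendsto (fun ξ => ξ - s) (𝓝[≠] s) (𝓝 0) :=
  tendsto_sub_nhds_zero_iff.2 (tendsto_nhdsWithin_of_tendsto_nhds tendsto_id)

theorem eq_zero_of_tendsto_inv_sub_smul {E : Type*} [AddCommGroup E] [Module ℂ E]
    [TopologicalSpace E] [ContinuousSMul ℂ E] [T2Space E] {f : ℂ → E} {s : ℂ} {a b : E}
    (hf : Tendsto f (𝓝[≠] s) (𝓝 a))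
    (h : Tendsto (fun ξ => (ξ - s)⁻¹ • f ξ) (𝓝[≠] s) (𝓝 b)) : a = 0 := by
  have hmul : Tendsto (fun ξ => (ξ - s) • (ξ - s)⁻¹ • f ξ) (𝓝[≠] s) (𝓝 0) := by
    simpa using (tendsto_sub_nhdsNE_zero s).smul h
  refine tendsto_nhds_unique hf (hmul.congr' ?_)
  filter_upwards [self_mem_nhdsWithin] with ξ hξ
  rw [smul_inv_smul₀ (sub_ne_zero.2 hξ)]

theorem analyticOnNhd_dslope {E : Type*} [NormedAddCommGroup E] [NormedSpace ℂ E]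
    [CompleteSpace E] {f : ℂ → E} {s : ℂ} {U : Set ℂ} (hU : IsOpen U) (hs : s ∈ U)
    (hf : AnalyticOnNhd ℂ f U) : AnalyticOnNhd ℂ (dslope f s) U := by
  rw [Complex.analyticOnNhd_iff_differentiableOn hU] at hf ⊢
  exact (Complex.differentiableOn_dslope (hU.mem_nhds hs)).2 hf

section Algebra

variable {E : Type*} [Ring E] [Algebra ℂ E]

theorem smul_add_mul_one_sub_smul (c : ℂ) (A G R : E) :
    (c • A + G) * (1 - c • R) = G + (c • (A - G * R) - (c * c) • (A * R)) := by
  simp only [mul_sub, add_mul, mul_one, smul_mul_assoc, mul_smul_comm, smul_add, smul_smul,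
    smul_sub]
  abel

variable [TopologicalSpace E] [IsTopologicalRing E] [ContinuousSMul ℂ E] [T2Space E]
  {G H : ℂ → E} {s : ℂ} {A R : E}

theorem tendsto_inv_sub_smul_add_mul_iff (hG : ContinuousAt G s) (hR : R * R = 0) :
    Tendsto (fun ξ => ((ξ - s)⁻¹ • A + G ξ) * R) (𝓝[≠] s) (𝓝 A) ↔ A = G s * R := by
  have hGR : Tendsto (fun ξ => G ξ * R) (𝓝[≠] s) (𝓝 (G s * R)) :=
    (hG.mul continuousAt_const).mono_left nhdsWithin_le_nhds
  simp only [add_mul, smul_mul_assoc]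
  constructor
  · intro h
    have hAR : A * R = 0 := eq_zero_of_tendsto_inv_sub_smul tendsto_const_nhds
      ((h.sub hGR).congr fun ξ => add_sub_cancel_right _ _)
    simp only [hAR, smul_zero, zero_add] at h
    exact tendsto_nhds_unique h hGR
  · intro hA
    have hAR : A * R = 0 := by rw [hA, mul_assoc, hR, mul_zero]
    simpa only [hAR, smul_zero, zero_add, ← hA] using hGR

theorem eq_mul_of_eventuallyEq_mul_one_sub (hG : ContinuousAt G s) (hH : ContinuousAt H s)
    (hHG : ∀ᶠ ξ in 𝓝[≠] s, H ξ = ((ξ - s)⁻¹ • A + G ξ) * (1 - (ξ - s)⁻¹ • R)) :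
    A = G s * R := by
  have hF : Tendsto (fun ξ => A - G ξ * R) (𝓝[≠] s) (𝓝 (A - G s * R)) :=
    (continuousAt_const.sub (hG.mul continuousAt_const)).mono_left nhdsWithin_le_nhds
  have hHG' : Tendsto (fun ξ => H ξ - G ξ) (𝓝[≠] s) (𝓝 (H s - G s)) :=
    (hH.sub hG).mono_left nhdsWithin_le_nhds
  have hexp : ∀ᶠ ξ in 𝓝[≠] s, H ξ - G ξ =
      (ξ - s)⁻¹ • (A - G ξ * R) - ((ξ - s)⁻¹ * (ξ - s)⁻¹) • (A * R) := by
    filter_upwards [hHG] with ξ hξ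
    rw [hξ, smul_add_mul_one_sub_smul, add_sub_cancel_left]
  -- the double pole `A * R` is removed first, using `(ξ - s) • (H ξ - G ξ)`
  have hAR : A * R = 0 := by
    refine eq_zero_of_tendsto_inv_sub_smul tendsto_const_nhds
      ((hF.sub ((tendsto_sub_nhdsNE_zero s).smul hHG')).congr' ?_)
    filter_upwards [hexp, self_mem_nhdsWithin] with ξ hξ hne
    have hne : ξ - s ≠ 0 := sub_ne_zero.2 hne
    rw [hξ, smul_sub, smul_inv_smul₀ hne, smul_smul, ← mul_assoc, mul_inv_cancel₀ hne, one_mul,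
      sub_sub_cancel]
  refine sub_eq_zero.1 (eq_zero_of_tendsto_inv_sub_smul hF (hHG'.congr' ?_))
  filter_upwards [hexp] with ξ hξ
  rw [hξ, hAR, smul_zero, sub_zero]

end Algebra

section Matrix

variable {m n : Type*}

theorem Matrix.continuousAt_of_analyticAt_apply {f : ℂ → Matrix m n ℂ} {s : ℂ}
    (hf : ∀ i j, AnalyticAt ℂ (fun ξ => f ξ i j) s) : ContinuousAt f s :=
  continuousAt_pi.2 fun i => continuousAt_pi.2 fun j => (hf i j).continuousAt

variable [Fintype m] [Fintype n]
attribute [local instance] Matrix.normedAddCommGroup Matrix.normedSpace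

theorem Matrix.analyticOnNhd_iff_apply {f : ℂ → Matrix m n ℂ} {U : Set ℂ} :
    AnalyticOnNhd ℂ f U ↔ ∀ i j, AnalyticOnNhd ℂ (fun ξ => f ξ i j) U :=
  (analyticOnNhd_pi_iff (f := fun i ξ => f ξ i)).trans
    (forall_congr' fun i => analyticOnNhd_pi_iff (f := fun j ξ => f ξ i j))

theorem Matrix.exists_analyticOnNhd_apply_eq_mul_one_sub [DecidableEq n] {G : ℂ → Matrix n n ℂ}
    {s : ℂ} {U : Set ℂ} {A R : Matrix n n ℂ} (hU : IsOpen U) (hs : s ∈ U)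
    (hG : ∀ i j, AnalyticOnNhd ℂ (fun ξ => G ξ i j) U) (hA : A = G s * R) (hR : R * R = 0) :
    ∃ H : ℂ → Matrix n n ℂ, (∀ i j, AnalyticOnNhd ℂ (fun ξ => H ξ i j) U) ∧
      ∀ ξ ≠ s, H ξ = ((ξ - s)⁻¹ • A + G ξ) * (1 - (ξ - s)⁻¹ • R) := by
  rw [← Matrix.analyticOnNhd_iff_apply] at hG
  set F : ℂ → Matrix n n ℂ := fun ξ => A - G ξ * R
  have hF : AnalyticOnNhd ℂ F U :=
    analyticOnNhd_const.sub ((LinearMap.mulRight ℂ R).toContinuousLinearMap.comp_analyticOnNhd hG)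
  have hFs : F s = 0 := sub_eq_zero.2 hA
  have hAR : A * R = 0 := by rw [hA, mul_assoc, hR, mul_zero]
  refine ⟨G + dslope F s,
    Matrix.analyticOnNhd_iff_apply.1 (hG.add (analyticOnNhd_dslope hU hs hF)), fun ξ hξ => ?_⟩
  rw [smul_add_mul_one_sub_smul, hAR, smul_zero, sub_zero, Pi.add_apply, dslope_of_ne _ hξ,
    slope_def_module, hFs, sub_zero]

end Matrix

theorem statement19_general (r : ℕ) (s : ℂ) (U : Set ℂ) (hU : IsOpen U) (hsU : s ∈ U)
    (G : ℂ → Matrix (Fin r) (Fin r) ℂ)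
    (hG : ∀ i j : Fin r, AnalyticOnNhd ℂ (fun ξ => G ξ i j) U)
    (A R : Matrix (Fin r) (Fin r) ℂ) (hR : R * R = 0) :
    (Filter.Tendsto (fun ξ : ℂ => ((ξ - s)⁻¹ • A + G ξ) * R) (𝓝[≠] s) (𝓝 A) ↔
        A = G s * R) ∧
    ((∃ H : ℂ → Matrix (Fin r) (Fin r) ℂ,
        (∀ i j : Fin r, AnalyticOnNhd ℂ (fun ξ => H ξ i j) U) ∧
        ∀ ξ ∈ U \ {s}, H ξ = ((ξ - s)⁻¹ • A + G ξ) * (1 - (ξ - s)⁻¹ • R)) ↔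
      A = G s * R) := by
  have hGs : ContinuousAt G s :=
    Matrix.continuousAt_of_analyticAt_apply fun i j => hG i j s hsU
  refine ⟨tendsto_inv_sub_smul_add_mul_iff hGs hR, ⟨?_, fun hA => ?_⟩⟩
  · rintro ⟨H, hH, hHeq⟩
    refine eq_mul_of_eventuallyEq_mul_one_sub hGs
      (Matrix.continuousAt_of_analyticAt_apply fun i j => hH i j s hsU) ?_
    filter_upwards [sdiff_mem_nhdsWithin_compl (hU.mem_nhds hsU) {s}] using hHeq
  · obtain ⟨H, hH, hHeq⟩ := Matrix.exists_analyticOnNhd_apply_eq_mul_one_sub hU hsU hG hA hR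
    exact ⟨H, hH, fun ξ hξ => hHeq ξ hξ.2⟩

theorem statement19 (r : ℕ) (hr : 1 ≤ r) (s : ℂ) (U : Set ℂ) (hU : IsOpen U) (hsU : s ∈ U)
    (G : ℂ → Matrix (Fin r) (Fin r) ℂ)
    (hG : ∀ i j : Fin r, AnalyticOnNhd ℂ (fun ξ => G ξ i j) U)
    (A R : Matrix (Fin r) (Fin r) ℂ) (hR : R * R = 0) :
    (Filter.Tendsto (fun ξ : ℂ => ((ξ - s)⁻¹ • A + G ξ) * R) (𝓝[≠] s) (𝓝 A) ↔
        A = G s * R) ∧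
    ((∃ H : ℂ → Matrix (Fin r) (Fin r) ℂ,
        (∀ i j : Fin r, AnalyticOnNhd ℂ (fun ξ => H ξ i j) U) ∧
        ∀ ξ ∈ U \ {s}, H ξ = ((ξ - s)⁻¹ • A + G ξ) * (1 - (ξ - s)⁻¹ • R)) ↔
      A = G s * R) :=
  statement19_general r s U hU hsU G hG A R hR
end
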